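/- arXiv:1006.4955 — 7 statements merged into one kernel-verified Lean document; each statement's English description precedes it below -/
import Mathlib

section
/- Let R be a term rewriting system over a signature Σ and let T be a set of ground terms over Σ. Then R is terminating on T (i.e., SN_T(R) holds) if and only if there exists a well-founded monotone partial Σ-algebra (A,[[·]],≻) such that T is defined (i.e., [[t]] is defined for every t ∈ T) and ≻ is a partial model for R. -/
namespace LocalTerm

/-- Terms over a signature `F` with arities `ar` and variables `X`. -/
inductive Tm (F : Type) (ar : F → ℕ) (X : Type) : Type
  | var : X → Tm F ar X
  | app : (f : F) → (Fin (ar f) → Tm F ar X) → Tm F ar X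

/-- Substitution. -/
def subst {F : Type} {ar : F → ℕ} {X Y : Type} (σ : X → Tm F ar Y) :
    Tm F ar X → Tm F ar Y
  | .var x => σ x
  | .app f ts => .app f fun i => subst σ (ts i)

/-- One-step rewrite relation of a set `R` of rules (over variables `X`),
acting on terms over variables `V`: a rule instance inside a one-hole context. -/
inductive Rw {F : Type} {ar : F → ℕ} {X V : Type}
    (R : Set (Tm F ar X × Tm F ar X)) : Tm F ar V → Tm F ar V → Prop
  | rule {l r : Tm F ar X} (h : (l, r) ∈ R) (σ : X → Tm F ar V) :
      Rw R (subst σ l) (subst σ r)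
  | ctxt {f : F} {ts : Fin (ar f) → Tm F ar V} (i : Fin (ar f)) {t' : Tm F ar V} :
      Rw R (ts i) t' → Rw R (Tm.app f ts) (Tm.app f (Function.update ts i t'))

/-- The set of variables of a term. -/
def Vars {F : Type} {ar : F → ℕ} {X : Type} : Tm F ar X → Set X
  | .var x => {x}
  | .app _ ts => ⋃ i, Vars (ts i)

/-- `R` is a TRS: no left-hand side is a variable,
and all variables of a right-hand side occur in the left-hand side. -/
def IsTRS {F : Type} {ar : F → ℕ} {X : Type}
    (R : Set (Tm F ar X × Tm F ar X)) : Prop :=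
  ∀ p ∈ R, (∀ x : X, p.1 ≠ Tm.var x) ∧ Vars p.2 ⊆ Vars p.1

/-- A partial interpretation of the function symbols in a set `A`:
for every `n`-ary symbol a partial function `Aⁿ ⇀ A`. -/
abbrev Interp (F : Type) (ar : F → ℕ) (A : Type) : Type :=
  ∀ f : F, (Fin (ar f) → A) → Option A

/-- `Eval I α t a` : the (partial) interpretation of `t` under assignment `α`
is defined and equal to `a`. -/
inductive Eval {F : Type} {ar : F → ℕ} {X A : Type}
    (I : Interp F ar A) (α : X → A) : Tm F ar X → A → Prop
  | var (x : X) : Eval I α (Tm.var x) (α x)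
  | app {f : F} {ts : Fin (ar f) → Tm F ar X} (as : Fin (ar f) → A) {a : A}
      (hts : ∀ i, Eval I α (ts i) (as i)) (hI : I f as = some a) :
      Eval I α (Tm.app f ts) a

/-- A set `T` of ground terms is defined if the interpretation of
every `t ∈ T` is defined. -/
def DefinedOn {F : Type} {ar : F → ℕ} {A : Type}
    (I : Interp F ar A) (T : Set (Tm F ar Empty)) : Prop :=
  ∀ t ∈ T, ∃ a : A, Eval I Empty.elim t a

/-- `succ` is a partial model for `R`: whenever the interpretation of a
left-hand side is defined, the right-hand side is defined as well and the
interpretations are related by `succ`. -/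
def PartialModel {F : Type} {ar : F → ℕ} {X A : Type}
    (I : Interp F ar A) (succ : A → A → Prop)
    (R : Set (Tm F ar X × Tm F ar X)) : Prop :=
  ∀ p ∈ R, ∀ (α : X → A) (a : A), Eval I α p.1 a →
    ∃ b : A, Eval I α p.2 b ∧ succ a b

/-- A partial function is closed w.r.t. a relation. -/
def ClosedFn {A : Type} {n : ℕ} (g : (Fin n → A) → Option A)
    (r : A → A → Prop) : Prop :=
  ∀ (v : Fin n → A) (i : Fin n) (b : A), r (v i) b → (g v).isSome →
    (g (Function.update v i b)).isSome

/-- A partial function is monotone w.r.t. a relation. -/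
def MonoFn {A : Type} {n : ℕ} (g : (Fin n → A) → Option A)
    (r : A → A → Prop) : Prop :=
  ∀ (v : Fin n → A) (i : Fin n) (b : A) (x y : A), r (v i) b →
    g v = some x → g (Function.update v i b) = some y → r x y

/-- `(A, I, r)` is a monotone partial algebra: every interpretation is
closed and monotone with respect to `r`. -/
def MonoAlg {F : Type} {ar : F → ℕ} {A : Type}
    (I : Interp F ar A) (r : A → A → Prop) : Prop :=
  ∀ f : F, ClosedFn (I f) r ∧ MonoFn (I f) r

/-- Well-foundedness: no infinite descending sequence. -/
def WFrel {A : Type} (r : A → A → Prop) : Prop :=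
  ¬ ∃ f : ℕ → A, ∀ n : ℕ, r (f n) (f (n + 1))

/-- `r` is terminating on `T`: no element of `T` starts an infinite `r`-sequence. -/
def SNon {B : Type} (r : B → B → Prop) (T : Set B) : Prop :=
  ∀ t ∈ T, ¬ ∃ f : ℕ → B, f 0 = t ∧ ∀ n : ℕ, r (f n) (f (n + 1))

/-- Relative termination on `T`: no element of `T` starts an infinite
`(r ∪ s)`-sequence containing infinitely many `r`-steps. -/
def SNrelOn {B : Type} (r s : B → B → Prop) (T : Set B) : Prop :=
  ∀ t ∈ T, ¬ ∃ f : ℕ → B, f 0 = t ∧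
    (∀ n : ℕ, r (f n) (f (n + 1)) ∨ s (f n) (f (n + 1))) ∧
    (∀ m : ℕ, ∃ n : ℕ, m ≤ n ∧ r (f n) (f (n + 1)))

/-- Relative termination (on everything). -/
def SNrel {B : Type} (r s : B → B → Prop) : Prop := SNrelOn r s Set.univ


/-
Termination is simulated in both directions by evaluation. A rewrite step inside a closed and
monotone partial algebra that models the rules keeps the value defined and makes it strictly
`≻`-smaller, so a well-founded `≻` bounds every rewrite sequence from a defined term. Conversely,
the terminating terms form such an algebra: interpret `f(t₁,…,tₙ)` as itself when it
terminates (and leave it undefined otherwise), and let `a ≻ b` mean that `a` terminates and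
rewrites to `b` in one step. Closedness is then preservation of termination under rewriting.
-/

section Relation

variable {A B C : Type}

theorem snOn_iff_forall_acc {r : B → B → Prop} {T : Set B} :
    SNon r T ↔ ∀ t ∈ T, Acc (flip r) t := by
  refine forall₂_congr fun t _ => ?_
  rw [← not_iff_not, not_not, not_acc_iff_exists_descending_chain]
  rfl

theorem wfrel_iff_wellFounded_flip {r : A → A → Prop} : WFrel r ↔ WellFounded (flip r) := by
  rw [WFrel, wellFounded_iff_isEmpty_descending_chain, isEmpty_subtype, not_exists]
  rfl

theorem acc_of_map {r : B → B → Prop} {s : C → C → Prop} (g : B → C)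
    (hg : ∀ a b, r a b → s (g a) (g b)) {a : B} (h : Acc s (g a)) : Acc r a :=
  Subrelation.accessible (hg _ _) (InvImage.accessible g h)

theorem acc_flip_of_simulation {r : B → B → Prop} {q : A → A → Prop}
    (hq : WellFounded (flip q)) (E : B → A → Prop)
    (hsim : ∀ {s s' a}, r s s' → E s a → ∃ b, E s' b ∧ q a b) {s : B} {a : A} (h : E s a) :
    Acc (flip r) s := by
  induction a using hq.induction generalizing s with
  | _ a ih =>
    refine ⟨s, fun s' hs' => ?_⟩
    obtain ⟨b, hb, hab⟩ := hsim hs' h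
    exact ih b hab hb

def snRestrict (r : B → B → Prop) (a b : B) : Prop := Acc (flip r) a ∧ r a b

theorem wfrel_snRestrict (r : B → B → Prop) : WFrel (snRestrict r) := by
  rintro ⟨f, hf⟩
  exact not_acc_iff_exists_descending_chain.2 ⟨f, rfl, fun n => (hf n).2⟩ (hf 0).1

end Relation

section Term

variable {F : Type} {ar : F → ℕ} {X V : Type}

theorem subst_var : ∀ t : Tm F ar X, subst Tm.var t = t
  | .var _ => rfl
  | .app f ts => congrArg (Tm.app f) (funext fun i => subst_var (ts i))

theorem acc_rw_arg {R : Set (Tm F ar X × Tm F ar X)} {f : F} {ts : Fin (ar f) → Tm F ar V}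
    (h : Acc (flip (Rw R)) (Tm.app f ts)) (i : Fin (ar f)) : Acc (flip (Rw R)) (ts i) := by
  refine acc_of_map (fun u => Tm.app f (Function.update ts i u)) (fun u u' hu => ?_) (by simpa)
  have h := Rw.ctxt (R := R) (ts := Function.update ts i u') i
    (by rw [Function.update_self]; exact hu)
  rwa [Function.update_idem] at h

end Term

namespace Eval

variable {F : Type} {ar : F → ℕ} {X Y A : Type} {I : Interp F ar A}

theorem unique {α : Y → A} {t : Tm F ar Y} {a b : A}
    (ha : Eval I α t a) (hb : Eval I α t b) : a = b := by
  induction ha generalizing b with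
  | var x => cases hb; rfl
  | app as _ hI ih =>
    cases hb with
    | app bs hbs hJ =>
      obtain rfl : as = bs := funext fun i => ih i (hbs i)
      exact Option.some.inj (hI.symm.trans hJ)

theorem exists_eq_some_of_ne_var {α : Y → A} {t : Tm F ar Y} {a : A} (h : Eval I α t a)
    (ht : ∀ x, t ≠ Tm.var x) : ∃ f as, I f as = some a := by
  cases h with
  | var x => exact absurd rfl (ht x)
  | app as _ hI => exact ⟨_, as, hI⟩

variable {σ : X → Tm F ar Y} {α : Y → A}

theorem exists_of_mem_vars_subst :
    ∀ {t : Tm F ar X} {a : A}, Eval I α (subst σ t) a → ∀ x ∈ Vars t, ∃ c, Eval I α (σ x) c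
  | .var _, a, h, _, rfl => ⟨a, h⟩
  | .app _ ts, _, .app _ hts _, x, hx => by
    obtain ⟨i, hi⟩ := Set.mem_iUnion.1 hx
    exact exists_of_mem_vars_subst (hts i) x hi

theorem of_subst {β : X → A} :
    ∀ {t : Tm F ar X} {a : A}, (∀ x ∈ Vars t, Eval I α (σ x) (β x)) →
      Eval I α (subst σ t) a → Eval I β t a
  | .var x, _, hβ, h => (h.unique (hβ x rfl)) ▸ Eval.var x
  | .app _ ts, _, hβ, .app as hts hI =>
    .app as (fun i => of_subst (fun x hx => hβ x (Set.mem_iUnion.2 ⟨i, hx⟩)) (hts i)) hI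

theorem to_subst {β : X → A} {t : Tm F ar X} {b : A} (h : Eval I β t b)
    (hβ : ∀ x ∈ Vars t, Eval I α (σ x) (β x)) : Eval I α (subst σ t) b := by
  induction h with
  | var x => exact hβ x rfl
  | app as _ hI ih =>
    exact .app as (fun i => ih i fun x hx => hβ x (Set.mem_iUnion.2 ⟨i, hx⟩)) hI

theorem exists_assignment_of_subst {t : Tm F ar X} {a : A} (h : Eval I α (subst σ t) a) :
    ∃ β : X → A, (∀ x ∈ Vars t, Eval I α (σ x) (β x)) ∧ Eval I β t a := by
  have : Nonempty A := ⟨a⟩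
  choose! β hβ using h.exists_of_mem_vars_subst
  exact ⟨β, hβ, h.of_subst hβ⟩

end Eval

section PartialAlgebra

variable {F : Type} {ar : F → ℕ} {X Y A : Type} {I : Interp F ar A} {succ : A → A → Prop}
  {R : Set (Tm F ar X × Tm F ar X)}

theorem Rw.exists_eval_succ (hvars : ∀ p ∈ R, Vars p.2 ⊆ Vars p.1) (hM : MonoAlg I succ)
    (hPM : PartialModel I succ R) {s s' : Tm F ar Y} (hs : Rw R s s') {α : Y → A} {a : A}
    (h : Eval I α s a) : ∃ b, Eval I α s' b ∧ succ a b := by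
  induction hs generalizing a with
  | rule hlr σ =>
    obtain ⟨β, hβ, hl⟩ := h.exists_assignment_of_subst
    obtain ⟨b, hr, hab⟩ := hPM _ hlr β a hl
    exact ⟨b, hr.to_subst fun x hx => hβ x (hvars _ hlr hx), hab⟩
  | @ctxt f ts i _ _ ih =>
    cases h with
    | app as hts hI =>
      obtain ⟨b, hb, hab⟩ := ih (hts i)
      obtain ⟨c, hc⟩ := Option.isSome_iff_exists.1 ((hM f).1 as i b hab (by simp [hI]))
      refine ⟨c, .app (Function.update as i b) (fun j => ?_) hc, (hM f).2 as i b a c hab hI hc⟩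
      rcases eq_or_ne j i with rfl | hji
      · simpa using hb
      · simpa [Function.update_of_ne hji] using hts j

theorem snOn_rw_of_partialModel (hvars : ∀ p ∈ R, Vars p.2 ⊆ Vars p.1) (hM : MonoAlg I succ)
    (hwf : WFrel succ) {T : Set (Tm F ar Empty)} (hT : DefinedOn I T)
    (hPM : PartialModel I succ R) : SNon (Rw R) T := by
  rw [snOn_iff_forall_acc]
  intro t ht
  obtain ⟨a, ha⟩ := hT t ht
  exact acc_flip_of_simulation (wfrel_iff_wellFounded_flip.1 hwf) _
    (fun hs h => hs.exists_eval_succ hvars hM hPM h) ha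

theorem monoAlg_none (succ : A → A → Prop) : MonoAlg (fun _ _ => none : Interp F ar A) succ :=
  fun _ => ⟨fun _ _ _ _ h => by simp at h, fun _ _ _ _ _ _ h => by simp at h⟩

theorem partialModel_none (hlhs : ∀ p ∈ R, ∀ x, p.1 ≠ Tm.var x) (succ : A → A → Prop) :
    PartialModel (fun _ _ => none : Interp F ar A) succ R := by
  rintro p hp α a ha
  obtain ⟨f, as, h⟩ := ha.exists_eq_some_of_ne_var (hlhs p hp)
  simp at h

end PartialAlgebra

section TermAlgebra

variable {F : Type} {ar : F → ℕ} {X Y V : Type} {R : Set (Tm F ar X × Tm F ar X)}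

open Classical in
noncomputable def snTermInterp (R : Set (Tm F ar X × Tm F ar X)) : Interp F ar (Tm F ar V) :=
  fun f ts => if Acc (flip (Rw R)) (Tm.app f ts) then some (Tm.app f ts) else none

theorem snTermInterp_eq_some_iff {f : F} {ts : Fin (ar f) → Tm F ar V} {a : Tm F ar V} :
    snTermInterp R f ts = some a ↔ Acc (flip (Rw R)) (Tm.app f ts) ∧ Tm.app f ts = a := by
  unfold snTermInterp
  split_ifs with h <;> simp [h]

theorem eq_subst_of_eval_snTermInterp {α : Y → Tm F ar V} {t : Tm F ar Y} {a : Tm F ar V}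
    (h : Eval (snTermInterp R) α t a) : a = subst α t := by
  induction h with
  | var x => rfl
  | app as _ hI ih =>
    obtain ⟨_, rfl⟩ := snTermInterp_eq_some_iff.1 hI
    exact congrArg _ (funext ih)

theorem eval_snTermInterp_subst {α : Y → Tm F ar V} :
    ∀ {t : Tm F ar Y}, Acc (flip (Rw R)) (subst α t) →
      Eval (snTermInterp R) α t (subst α t)
  | .var x, _ => .var x
  | .app _ _, h =>
    .app _ (fun i => eval_snTermInterp_subst (acc_rw_arg h i))
      (snTermInterp_eq_some_iff.2 ⟨h, rfl⟩)

theorem monoAlg_snTermInterp :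
    MonoAlg (snTermInterp R : Interp F ar (Tm F ar V)) (snRestrict (Rw R)) := by
  refine fun f => ⟨fun v i b hb hv => ?_, fun v i b x y hb hx hy => ?_⟩
  · obtain ⟨a, ha⟩ := Option.isSome_iff_exists.1 hv
    have hacc := (snTermInterp_eq_some_iff.1 ha).1.inv (Rw.ctxt i hb.2)
    simp [snTermInterp, hacc]
  · obtain ⟨hacc, rfl⟩ := snTermInterp_eq_some_iff.1 hx
    obtain ⟨-, rfl⟩ := snTermInterp_eq_some_iff.1 hy
    exact ⟨hacc, Rw.ctxt i hb.2⟩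

theorem partialModel_snTermInterp (hlhs : ∀ p ∈ R, ∀ x, p.1 ≠ Tm.var x) :
    PartialModel (snTermInterp R : Interp F ar (Tm F ar V)) (snRestrict (Rw R)) R := by
  rintro ⟨l, r⟩ hlr α a ha
  obtain ⟨f, as, hI⟩ := ha.exists_eq_some_of_ne_var (hlhs _ hlr)
  obtain ⟨hacc, rfl⟩ := snTermInterp_eq_some_iff.1 hI
  have hstep : Rw R (subst α l) (subst α r) := Rw.rule hlr α
  rw [eq_subst_of_eval_snTermInterp ha] at hacc ⊢
  exact ⟨_, eval_snTermInterp_subst (hacc.inv hstep), hacc, hstep⟩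

theorem definedOn_snTermInterp {T : Set (Tm F ar Empty)}
    (hT : ∀ t ∈ T, Acc (flip (Rw R)) t) :
    DefinedOn (snTermInterp R : Interp F ar (Tm F ar Empty)) T := by
  intro t ht
  have hground : subst Empty.elim t = t :=
    (congrArg (subst · t) (funext fun x => x.elim : Empty.elim = Tm.var)).trans (subst_var t)
  have h := eval_snTermInterp_subst (R := R) (hground.symm ▸ hT t ht)
  rw [hground] at h
  exact ⟨t, h⟩

end TermAlgebra

/-- A TRS `R` is terminating on a set `T` of ground terms iff
there exists a well-founded monotone partial Σ-algebra `(A, I, succ)` such that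
`T` is defined and `succ` is a partial model for `R`. -/
theorem local_termination_iff_wf_monotone_partial_algebra
    {F X : Type} {ar : F → ℕ}
    (R : Set (Tm F ar X × Tm F ar X)) (hR : IsTRS R)
    (T : Set (Tm F ar Empty)) :
    SNon (Rw R) T ↔
      ∃ (A : Type) (_ : Nonempty A) (I : Interp F ar A) (succ : A → A → Prop),
        MonoAlg I succ ∧ WFrel succ ∧ DefinedOn I T ∧ PartialModel I succ R := by
  constructor
  · intro hSN
    rw [snOn_iff_forall_acc] at hSN
    obtain hempty | hne := isEmpty_or_nonempty (Tm F ar Empty)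
    · exact ⟨PUnit, inferInstance, fun _ _ => none, fun _ _ => False, monoAlg_none _,
        fun ⟨_, hf⟩ => hf 0, fun t _ => isEmptyElim t,
        partialModel_none (fun p hp => (hR p hp).1) _⟩
    · exact ⟨_, hne, snTermInterp R, snRestrict (Rw R), monoAlg_snTermInterp,
        wfrel_snRestrict _, definedOn_snTermInterp hSN,
        partialModel_snTermInterp fun p hp => (hR p hp).1⟩
  · rintro ⟨A, -, I, succ, hM, hwf, hT, hPM⟩
    exact snOn_rw_of_partialModel (fun p hp => (hR p hp).2) hM hwf hT hPM

end LocalTerm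
end

section
/- Let R and S be term rewriting systems over a signature Σ and let T be a set of ground terms over Σ. Then R is terminating relative to S on T (i.e., SN_T(R/S) holds) if and only if there exists an extended well-founded monotone partial Σ-algebra (A,[[·]],≻,⊒) such that T is defined, ≻ is a partial model for R, and ⊒ is a partial model for S. -/
namespace LocalTerm

/-!
Soundness: evaluation turns every rewrite step of a defined term into a step between the
values, a `≻`-step for `R` and a `⊒`-step for `S`. Rule instances are handled by the
partial-model property (the variables of a right-hand side occur on the left, so the
assignment read off the left-hand side suffices), steps below the root by closedness and
monotonicity. An infinite relative rewrite sequence from `T` would therefore give an infinite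
`(≻ ∪ ⊒)`-sequence with infinitely many `≻`-steps.

Completeness: take the ground terms reachable from `T` by rewriting and passing to subterms,
let each symbol build terms exactly inside this set, and let `≻` and `⊒` be the rewrite
relations of `R` and `S` restricted to it. Being closed under subterms, the set makes every
reachable term evaluate to itself; since left-hand sides are not variables, a defined instance
of a left-hand side is reachable, hence so is its contractum. Relative termination spreads from
`T` to the whole set because it is inherited along rewrite steps and by subterms (simulation
in a context). If `T` is empty there may be no ground terms at all, and a one-point algebra
with every symbol undefined is used instead.
-/

section Relative

variable {B : Type} {r s : B → B → Prop}

theorem SNrelOn.of_simulation {B' : Type} {r' s' : B' → B' → Prop} {T : Set B}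
    {T' : Set B'} (ρ : B → B' → Prop)
    (hr : ∀ t u a, ρ t a → r t u → ∃ b, ρ u b ∧ r' a b)
    (hs : ∀ t u a, ρ t a → s t u → ∃ b, ρ u b ∧ s' a b)
    (hT : ∀ t ∈ T, ∃ a ∈ T', ρ t a) (h : SNrelOn r' s' T') : SNrelOn r s T := by
  rintro _ ht ⟨f, rfl, hstep, hinf⟩
  obtain ⟨a, ha, hρa⟩ := hT _ ht
  have hnext : ∀ n a, ρ (f n) a → ∃ b, ρ (f (n + 1)) b ∧ (r' a b ∨ s' a b) ∧
      (r (f n) (f (n + 1)) → r' a b) := by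
    intro n a hρ
    by_cases hrn : r (f n) (f (n + 1))
    · obtain ⟨b, hρb, hab⟩ := hr _ _ _ hρ hrn
      exact ⟨b, hρb, Or.inl hab, fun _ => hab⟩
    · obtain ⟨b, hρb, hab⟩ := hs _ _ _ hρ ((hstep n).resolve_left hrn)
      exact ⟨b, hρb, Or.inr hab, fun h => absurd h hrn⟩
  choose next hnext using hnext
  let g : (n : ℕ) → {b // ρ (f n) b} := fun n =>
    Nat.rec ⟨a, hρa⟩ (fun n b => ⟨next n b.1 b.2, (hnext n b.1 b.2).1⟩) n
  refine h a ha ⟨fun n => (g n).1, rfl, fun n => (hnext n _ (g n).2).2.1, fun m => ?_⟩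
  obtain ⟨n, hmn, hrn⟩ := hinf m
  exact ⟨n, hmn, (hnext n _ (g n).2).2.2 hrn⟩

theorem SNrelOn.singleton_of_step {t u : B} (h : SNrelOn r s {t}) (htu : r t u ∨ s t u) :
    SNrelOn r s {u} := by
  rintro _ rfl ⟨f, rfl, hstep, hinf⟩
  refine h t rfl ⟨fun | 0 => t | n + 1 => f n, rfl, fun | 0 => htu | n + 1 => hstep n,
    fun m => ?_⟩
  obtain ⟨n, hmn, hrn⟩ := hinf m
  exact ⟨n + 1, by omega, hrn⟩

theorem SNrelOn.snrel_restrict {P : B → Prop} (h : SNrelOn r s {t | P t}) :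
    SNrel (fun a b => P a ∧ r a b) (fun a b => P a ∧ s a b) := by
  rintro _ - ⟨f, rfl, hstep, hinf⟩
  exact h _ ((hstep 0).elim And.left And.left)
    ⟨f, rfl, fun n => (hstep n).imp And.right And.right,
      fun m => (hinf m).imp fun _ => And.imp_right And.right⟩

theorem snrel_false : SNrel (fun _ _ : B => False) (fun _ _ => False) :=
  fun _ _ ⟨_, _, hstep, _⟩ => (hstep 0).elim id id

end Relative

section Terms

variable {F : Type} {ar : F → ℕ} {X : Type}

theorem Rw.app_update {V : Type} {Q : Set (Tm F ar X × Tm F ar X)} {f : F}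
    {ts : Fin (ar f) → Tm F ar V} (i : Fin (ar f)) {u v : Tm F ar V} (h : Rw Q u v) :
    Rw Q (Tm.app f (Function.update ts i u)) (Tm.app f (Function.update ts i v)) := by
  simpa using Rw.ctxt (R := Q) (ts := Function.update ts i u) i (t' := v) (by simpa using h)

theorem subst_emptyElim (t : Tm F ar Empty) : subst Empty.elim t = t := by
  induction t with
  | var x => exact x.elim
  | app f ts ih => simp only [subst, ih]

variable {A : Type} {I : Interp F ar A} {α : X → A}

theorem eval_var_iff {x : X} {a : A} : Eval I α (Tm.var x) a ↔ a = α x :=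
  ⟨fun h => by cases h; rfl, fun h => h ▸ Eval.var x⟩

theorem eval_app_iff {f : F} {ts : Fin (ar f) → Tm F ar X} {a : A} :
    Eval I α (Tm.app f ts) a ↔ ∃ as, (∀ i, Eval I α (ts i) (as i)) ∧ I f as = some a :=
  ⟨fun h => by cases h with | app as hts hI => exact ⟨as, hts, hI⟩,
    fun ⟨as, hts, hI⟩ => Eval.app as hts hI⟩

theorem Eval.unique_s1 {t : Tm F ar X} {a b : A} (ha : Eval I α t a) (hb : Eval I α t b) :
    a = b := by
  induction ha generalizing b with
  | var x => exact (eval_var_iff.1 hb).symm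
  | app as _ hI ih =>
    obtain ⟨bs, hbs, hI'⟩ := eval_app_iff.1 hb
    rw [← funext fun i => ih i (hbs i), hI] at hI'
    exact Option.some.inj hI'

theorem Eval.exists_of_subst {V : Type} {γ : V → A} {σ : X → Tm F ar V} {t : Tm F ar X}
    {a : A} (h : Eval I γ (subst σ t) a) {x : X} (hx : x ∈ Vars t) :
    ∃ b, Eval I γ (σ x) b := by
  induction t generalizing a with
  | var y =>
    obtain rfl : x = y := hx
    exact ⟨a, h⟩
  | app f ts ih =>
    obtain ⟨i, hi⟩ := Set.mem_iUnion.1 hx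
    obtain ⟨as, hts, -⟩ := eval_app_iff.1 h
    exact ih i (hts i) hi

theorem eval_subst_iff {V : Type} {γ : V → A} {σ : X → Tm F ar V} {β : X → A}
    {t : Tm F ar X} (hβ : ∀ x ∈ Vars t, Eval I γ (σ x) (β x)) {a : A} :
    Eval I γ (subst σ t) a ↔ Eval I β t a := by
  induction t generalizing a with
  | var y =>
    have hy := hβ y rfl
    exact ⟨fun h => eval_var_iff.2 (h.unique_s1 hy), fun h => eval_var_iff.1 h ▸ hy⟩
  | app f ts ih =>
    simp only [subst, eval_app_iff]
    exact exists_congr fun as => and_congr_left' <| forall_congr' fun i =>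
      ih i fun x hx => hβ x (Set.mem_iUnion.2 ⟨i, hx⟩)

theorem PartialModel.exists_eval_of_rw {succ : A → A → Prop}
    {Q : Set (Tm F ar X × Tm F ar X)} (hQ : IsTRS Q) (hI : MonoAlg I succ)
    (hM : PartialModel I succ Q) {V : Type} {γ : V → A} {s u : Tm F ar V} (h : Rw Q s u)
    {a : A} (ha : Eval I γ s a) : ∃ b, Eval I γ u b ∧ succ a b := by
  induction h generalizing a with
  | @rule l r hlr σ =>
    classical
    let β : X → A := fun x => if hx : ∃ b, Eval I γ (σ x) b then hx.choose else a
    have hβ : ∀ x ∈ Vars l, Eval I γ (σ x) (β x) := fun x hx => by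
      have hex := ha.exists_of_subst hx
      simpa only [β, dif_pos hex] using hex.choose_spec
    obtain ⟨b, hb, hab⟩ := hM _ hlr β a ((eval_subst_iff hβ).1 ha)
    exact ⟨b, (eval_subst_iff fun x hx => hβ x ((hQ _ hlr).2 hx)).2 hb, hab⟩
  | @ctxt f ts i t' _ ih =>
    obtain ⟨as, hts, hIa⟩ := eval_app_iff.1 ha
    obtain ⟨b, hb, hab⟩ := ih (hts i)
    obtain ⟨a', ha'⟩ := Option.isSome_iff_exists.1 ((hI f).1 as i b hab (by simp [hIa]))
    refine ⟨a', eval_app_iff.2 ⟨Function.update as i b, fun j => ?_, ha'⟩,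
      (hI f).2 as i b a a' hab hIa ha'⟩
    rcases eq_or_ne j i with rfl | hne
    · simpa using hb
    · simpa [Function.update_of_ne hne] using hts j

theorem monoAlg_false (I : Interp F ar A) : MonoAlg I fun _ _ => False :=
  fun _ => ⟨fun _ _ _ h => h.elim, fun _ _ _ _ _ h => h.elim⟩

theorem partialModel_undefined {Q : Set (Tm F ar X × Tm F ar X)} (hQ : IsTRS Q)
    (succ : A → A → Prop) : PartialModel (fun _ _ => none : Interp F ar A) succ Q := by
  rintro ⟨l, r⟩ hlr β a ha
  cases ha with
  | var x => exact absurd rfl ((hQ _ hlr).1 x)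
  | app _ _ hI => cases hI

end Terms

section TermAlgebra

variable {F : Type} {ar : F → ℕ} {X : Type}

inductive Reachable (R S : Set (Tm F ar X × Tm F ar X)) (T : Set (Tm F ar Empty)) :
    Tm F ar Empty → Prop
  | base {t} : t ∈ T → Reachable R S T t
  | rewR {t u} : Reachable R S T t → Rw R t u → Reachable R S T u
  | rewS {t u} : Reachable R S T t → Rw S t u → Reachable R S T u
  | sub {f ts} (i : Fin (ar f)) : Reachable R S T (Tm.app f ts) → Reachable R S T (ts i)

variable {R S : Set (Tm F ar X × Tm F ar X)} {T : Set (Tm F ar Empty)}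

theorem SNrelOn.reachable (h : SNrelOn (Rw R) (Rw S) T) :
    SNrelOn (Rw R) (Rw S) {t | Reachable R S T t} := by
  suffices H : ∀ t, Reachable R S T t → SNrelOn (Rw R) (Rw S) {t} from
    fun t ht => H t ht t rfl
  intro t ht
  induction ht with
  | base ht => rintro _ rfl; exact h _ ht
  | rewR _ hrw ih => exact ih.singleton_of_step (Or.inl hrw)
  | rewS _ hrw ih => exact ih.singleton_of_step (Or.inr hrw)
  | @sub f ts i _ ih =>
    refine ih.of_simulation (fun u v => v = Tm.app f (Function.update ts i u))
      (fun _ _ _ h hrw => ⟨_, rfl, h ▸ hrw.app_update i⟩)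
      (fun _ _ _ h hrw => ⟨_, rfl, h ▸ hrw.app_update i⟩) ?_
    rintro _ rfl
    exact ⟨_, rfl, by rw [Function.update_eq_self]⟩

open Classical in
noncomputable def reachableInterp (R S : Set (Tm F ar X × Tm F ar X))
    (T : Set (Tm F ar Empty)) : Interp F ar (Tm F ar Empty) :=
  fun f as => if Reachable R S T (Tm.app f as) then some (Tm.app f as) else none

theorem reachableInterp_eq_some {f : F} {as : Fin (ar f) → Tm F ar Empty}
    {a : Tm F ar Empty} :
    reachableInterp R S T f as = some a ↔ Reachable R S T (Tm.app f as) ∧ Tm.app f as = a :=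
  Option.ite_some_none_eq_some

theorem isSome_reachableInterp {f : F} {as : Fin (ar f) → Tm F ar Empty} :
    (reachableInterp R S T f as).isSome ↔ Reachable R S T (Tm.app f as) :=
  Option.isSome_ite

theorem monoAlg_reachableInterp {Q : Set (Tm F ar X × Tm F ar X)}
    (hQ : ∀ {t u}, Reachable R S T t → Rw Q t u → Reachable R S T u) :
    MonoAlg (reachableInterp R S T) fun a b => Reachable R S T a ∧ Rw Q a b := by
  refine fun f => ⟨fun v i b hvb hv => ?_, fun v i b x y hvb hx hy => ?_⟩
  · rw [isSome_reachableInterp] at hv ⊢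
    exact hQ hv (Rw.ctxt i hvb.2)
  · obtain ⟨hv, rfl⟩ := reachableInterp_eq_some.1 hx
    obtain ⟨-, rfl⟩ := reachableInterp_eq_some.1 hy
    exact ⟨hv, Rw.ctxt i hvb.2⟩

variable {Y : Type} {α : Y → Tm F ar Empty}

theorem eval_reachableInterp_subst (t : Tm F ar Y) (h : Reachable R S T (subst α t)) :
    Eval (reachableInterp R S T) α t (subst α t) := by
  induction t with
  | var x => exact Eval.var x
  | app f ts ih =>
    exact eval_app_iff.2 ⟨fun i => subst α (ts i), fun i => ih i (h.sub i),
      reachableInterp_eq_some.2 ⟨h, rfl⟩⟩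

theorem Eval.eq_subst_of_reachableInterp {t : Tm F ar Y} {a : Tm F ar Empty}
    (h : Eval (reachableInterp R S T) α t a) : a = subst α t := by
  induction h with
  | var x => rfl
  | app as _ hI ih =>
    obtain ⟨-, rfl⟩ := reachableInterp_eq_some.1 hI
    simp only [subst, funext ih]

theorem Eval.reachable_of_reachableInterp {t : Tm F ar Y} {a : Tm F ar Empty}
    (h : Eval (reachableInterp R S T) α t a) (ht : ∀ x, t ≠ Tm.var x) :
    Reachable R S T a := by
  cases h with
  | var x => exact absurd rfl (ht x)
  | app as _ hI =>
    obtain ⟨h, rfl⟩ := reachableInterp_eq_some.1 hI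
    exact h

theorem definedOn_reachableInterp : DefinedOn (reachableInterp R S T) T := by
  intro t ht
  have h := eval_reachableInterp_subst (R := R) (S := S) (α := Empty.elim) t
    ((subst_emptyElim t).symm ▸ Reachable.base ht)
  rw [subst_emptyElim] at h
  exact ⟨t, h⟩

theorem partialModel_reachableInterp {Q : Set (Tm F ar X × Tm F ar X)} (hQ : IsTRS Q)
    (hreach : ∀ {t u}, Reachable R S T t → Rw Q t u → Reachable R S T u) :
    PartialModel (reachableInterp R S T) (fun a b => Reachable R S T a ∧ Rw Q a b) Q := by
  rintro ⟨l, r⟩ hlr β a ha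
  have hl := ha.reachable_of_reachableInterp (hQ _ hlr).1
  obtain rfl := ha.eq_subst_of_reachableInterp
  have hrw : Rw Q (subst β l) (subst β r) := Rw.rule hlr β
  exact ⟨_, eval_reachableInterp_subst r (hreach hl hrw), hl, hrw⟩

end TermAlgebra

/-- `R` is terminating relative to `S` on a set `T` of ground
terms iff there exists an extended well-founded monotone partial Σ-algebra
`(A, I, succ, sq)` such that `T` is defined, `succ` is a partial model for `R`
and `sq` is a partial model for `S`. -/
theorem local_relative_termination_iff_extended_wf_monotone_partial_algebra
    {F X : Type} {ar : F → ℕ}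
    (R S : Set (Tm F ar X × Tm F ar X)) (hR : IsTRS R) (hS : IsTRS S)
    (T : Set (Tm F ar Empty)) :
    SNrelOn (Rw R) (Rw S) T ↔
      ∃ (A : Type) (_ : Nonempty A) (I : Interp F ar A)
        (succ sq : A → A → Prop),
        MonoAlg I succ ∧ MonoAlg I sq ∧ SNrel succ sq ∧
        DefinedOn I T ∧ PartialModel I succ R ∧ PartialModel I sq S := by
  constructor
  · intro hSN
    rcases T.eq_empty_or_nonempty with rfl | ⟨t₀, -⟩
    · exact ⟨Unit, ⟨()⟩, fun _ _ => none, _, _, monoAlg_false _, monoAlg_false _,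
        snrel_false, fun _ h => h.elim, partialModel_undefined hR _, partialModel_undefined hS _⟩
    · exact ⟨Tm F ar Empty, ⟨t₀⟩, reachableInterp R S T, _, _,
        monoAlg_reachableInterp Reachable.rewR, monoAlg_reachableInterp Reachable.rewS,
        hSN.reachable.snrel_restrict, definedOn_reachableInterp,
        partialModel_reachableInterp hR Reachable.rewR,
        partialModel_reachableInterp hS Reachable.rewS⟩
  · rintro ⟨A, -, I, succ, sq, hsucc, hsq, hSN, hdef, hmR, hmS⟩
    exact SNrelOn.of_simulation (Eval I Empty.elim)
      (fun _ _ _ ha hrw => hmR.exists_eval_of_rw hR hsucc hrw ha)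
      (fun _ _ _ ha hrw => hmS.exists_eval_of_rw hS hsq hrw ha)
      (fun t ht => (hdef t ht).imp fun _ ha => ⟨Set.mem_univ _, ha⟩) hSN

end LocalTerm
end

section
/- Let R be a TRS over a signature Σ with the property that every ground term is weakly normalizing if and only if it is strongly normalizing, and let N be the set of normalizing ground terms. Then: (i) each congruence class of the Nerode congruence ~_N is closed under R-rewriting and under R-expansion, i.e., whenever t₁ →_R t₂ for ground terms t₁, t₂, then t₁ ~_N t₂; and (ii) the complement of N is one congruence class of ~_N, i.e., any two ground terms not in N are ~_N-equivalent, and no ground term outside N is ~_N-equivalent to a term in N. -/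
namespace LocalTerm

/-- Subterm relation. -/
inductive Subt {F : Type} {ar : F → ℕ} {X : Type} :
    Tm F ar X → Tm F ar X → Prop
  | refl (t : Tm F ar X) : Subt t t
  | app {s : Tm F ar X} {f : F} {ts : Fin (ar f) → Tm F ar X} (i : Fin (ar f)) :
      Subt s (ts i) → Subt s (Tm.app f ts)

/-- A ground term is an `R`-normal form: it contains no instance of a
left-hand side of `R` as a subterm. -/
def IsNormalForm {F : Type} {ar : F → ℕ} {X : Type}
    (R : Set (Tm F ar X × Tm F ar X)) (t : Tm F ar Empty) : Prop :=
  ¬ ∃ p ∈ R, ∃ σ : X → Tm F ar Empty, Subt (subst σ p.1) t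

/-- Weak normalisation of a ground term: it reduces to a normal form. -/
def WN {F : Type} {ar : F → ℕ} {X : Type}
    (R : Set (Tm F ar X × Tm F ar X)) (t : Tm F ar Empty) : Prop :=
  ∃ u : Tm F ar Empty, Relation.ReflTransGen (Rw R) t u ∧ IsNormalForm R u

/-- Strong normalisation of a ground term: no infinite rewrite sequence. -/
def SN {F : Type} {ar : F → ℕ} {X : Type}
    (R : Set (Tm F ar X × Tm F ar X)) (t : Tm F ar Empty) : Prop :=
  ¬ ∃ f : ℕ → Tm F ar Empty, f 0 = t ∧ ∀ n : ℕ, Rw R (f n) (f (n + 1))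

/-- Number of variable occurrences of a term over a single variable. -/
def countVar {F : Type} {ar : F → ℕ} : Tm F ar Unit → ℕ
  | .var _ => 1
  | .app _ ts => ∑ i, countVar (ts i)

/-- A ground one-hole context: a term over one variable (the hole) with
exactly one occurrence of it. -/
def OneHole {F : Type} {ar : F → ℕ} (C : Tm F ar Unit) : Prop :=
  countVar C = 1

/-- Plugging a ground term into a context. -/
def plug {F : Type} {ar : F → ℕ} (C : Tm F ar Unit) (t : Tm F ar Empty) :
    Tm F ar Empty :=
  subst (fun _ => t) C

/-- The Nerode congruence of a set `N` of ground terms. -/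
def Nerode {F : Type} {ar : F → ℕ} (N : Set (Tm F ar Empty))
    (t1 t2 : Tm F ar Empty) : Prop :=
  ∀ C : Tm F ar Unit, OneHole C → (plug C t1 ∈ N ↔ plug C t2 ∈ N)

/-! Rewriting is closed under one-hole contexts, so an infinite reduction of `t` lifts to one of
`C[t]`: non-termination is inherited upwards, whence all non-normalizing terms are Nerode
equivalent. A step `t₁ → t₂` preserves strong normalization forwards and weak normalization
backwards; as the two notions coincide, `C[t₁]` and `C[t₂]` normalize together. -/

section

variable {F X : Type} {ar : F → ℕ} {R : Set (Tm F ar X × Tm F ar X)}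

theorem subst_eq_of_countVar_eq_zero {Y : Type} (σ τ : Unit → Tm F ar Y) {s : Tm F ar Unit}
    (hs : countVar s = 0) :
    subst σ s = subst τ s := by
  induction s with
  | var => simp [countVar] at hs
  | app f ts ih =>
    simp only [countVar, Finset.sum_eq_zero_iff, Finset.mem_univ, forall_true_left] at hs
    simp only [subst]
    exact congrArg _ (funext fun i => ih i (hs i))

theorem OneHole.exists_arg {f : F} {ts : Fin (ar f) → Tm F ar Unit}
    (hC : OneHole (Tm.app f ts)) :
    ∃ i, OneHole (ts i) ∧ ∀ j, j ≠ i → countVar (ts j) = 0 := by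
  unfold OneHole countVar at hC
  obtain ⟨i, hi⟩ : ∃ i, countVar (ts i) ≠ 0 := by
    by_contra! hall
    simp [hall] at hC
  have hsplit := Finset.add_sum_erase Finset.univ (fun j => countVar (ts j)) (Finset.mem_univ i)
  have hrest : ∑ j ∈ Finset.univ.erase i, countVar (ts j) = 0 := by omega
  refine ⟨i, by unfold OneHole; omega, fun j hj => ?_⟩
  exact Finset.sum_eq_zero_iff.mp hrest j (Finset.mem_erase.mpr ⟨hj, Finset.mem_univ j⟩)

theorem Rw.plug {t₁ t₂ : Tm F ar Empty} (h : Rw R t₁ t₂) {C : Tm F ar Unit}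
    (hC : OneHole C) :
    Rw R (plug C t₁) (plug C t₂) := by
  induction C with
  | var => exact h
  | app f ts ih =>
    obtain ⟨i, hi, hrest⟩ := hC.exists_arg
    have hupd : Function.update (fun j => LocalTerm.plug (ts j) t₁) i
        (LocalTerm.plug (ts i) t₂) = fun j => LocalTerm.plug (ts j) t₂ := by
      funext j
      rcases eq_or_ne j i with rfl | hne
      · simp
      · rw [Function.update_of_ne hne]
        exact subst_eq_of_countVar_eq_zero _ _ (hrest j hne)
    have hstep := Rw.ctxt (R := R) (ts := fun j => LocalTerm.plug (ts j) t₁) i (ih i hi)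
    rwa [hupd] at hstep

theorem SN.of_rw {t t' : Tm F ar Empty} (hsn : SN R t) (h : Rw R t t') : SN R t' := by
  rintro ⟨f, rfl, hf⟩
  refine hsn ⟨fun n => Nat.casesOn n t f, rfl, ?_⟩
  rintro (_ | n)
  exacts [h, hf n]

theorem WN.of_rw {t t' : Tm F ar Empty} (h : Rw R t t') (hwn : WN R t') : WN R t :=
  let ⟨u, hu, hnf⟩ := hwn
  ⟨u, .head h hu, hnf⟩

theorem not_SN_plug {t : Tm F ar Empty} (hsn : ¬ SN R t) {C : Tm F ar Unit} (hC : OneHole C) :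
    ¬ SN R (plug C t) := by
  obtain ⟨f, rfl, hf⟩ := not_not.mp hsn
  exact fun hCsn => hCsn ⟨fun n => plug C (f n), rfl, fun n => (hf n).plug hC⟩

theorem Nerode.mem_iff {N : Set (Tm F ar Empty)}
    {t₁ t₂ : Tm F ar Empty} (h : Nerode N t₁ t₂) : t₁ ∈ N ↔ t₂ ∈ N :=
  h (Tm.var ()) rfl

theorem nerode_WN_of_rw (hWS : ∀ t : Tm F ar Empty, WN R t ↔ SN R t)
    {t₁ t₂ : Tm F ar Empty} (h : Rw R t₁ t₂) : Nerode {t | WN R t} t₁ t₂ := fun _ hC =>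
  ⟨fun h₁ => (hWS _).mpr (((hWS _).mp h₁).of_rw (h.plug hC)), WN.of_rw (h.plug hC)⟩

theorem not_WN_plug (hWS : ∀ t : Tm F ar Empty, WN R t ↔ SN R t) {t : Tm F ar Empty}
    (ht : ¬ WN R t) {C : Tm F ar Unit} (hC : OneHole C) : ¬ WN R (plug C t) := by
  rw [hWS] at ht ⊢
  exact not_SN_plug ht hC

theorem nerode_WN_of_not_WN (hWS : ∀ t : Tm F ar Empty, WN R t ↔ SN R t)
    {t₁ t₂ : Tm F ar Empty} (h₁ : ¬ WN R t₁) (h₂ : ¬ WN R t₂) :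
    Nerode {t | WN R t} t₁ t₂ := fun _ hC =>
  iff_of_false (not_WN_plug hWS h₁ hC) (not_WN_plug hWS h₂ hC)

end

theorem nerode_classes_of_WN_eq_SN_general
    {F X : Type} {ar : F → ℕ}
    (R : Set (Tm F ar X × Tm F ar X))
    (hWS : ∀ t : Tm F ar Empty, WN R t ↔ SN R t) :
    (∀ t1 t2 : Tm F ar Empty, Rw R t1 t2 →
        Nerode {t : Tm F ar Empty | WN R t} t1 t2) ∧
    (∀ t1 t2 : Tm F ar Empty, ¬ WN R t1 → ¬ WN R t2 →
        Nerode {t : Tm F ar Empty | WN R t} t1 t2) ∧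
    (∀ t1 t2 : Tm F ar Empty, ¬ WN R t1 → WN R t2 →
        ¬ Nerode {t : Tm F ar Empty | WN R t} t1 t2) :=
  ⟨fun _ _ => nerode_WN_of_rw hWS, fun _ _ => nerode_WN_of_not_WN hWS,
    fun _ _ h₁ h₂ hN => h₁ (hN.mem_iff.mpr h₂)⟩

/-- If for the TRS `R` every ground term is weakly
normalizing iff it is strongly normalizing, and `N` is the set of normalizing
ground terms, then (i) each `~_N` congruence class is closed under rewriting
and expansion, and (ii) the complement of `N` is a single `~_N` class. -/
theorem nerode_classes_of_WN_eq_SN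
    {F X : Type} {ar : F → ℕ}
    (R : Set (Tm F ar X × Tm F ar X)) (hR : IsTRS R)
    (hWS : ∀ t : Tm F ar Empty, WN R t ↔ SN R t) :
    (∀ t1 t2 : Tm F ar Empty, Rw R t1 t2 →
        Nerode {t : Tm F ar Empty | WN R t} t1 t2) ∧
    (∀ t1 t2 : Tm F ar Empty, ¬ WN R t1 → ¬ WN R t2 →
        Nerode {t : Tm F ar Empty | WN R t} t1 t2) ∧
    (∀ t1 t2 : Tm F ar Empty, ¬ WN R t1 → WN R t2 →
        ¬ Nerode {t : Tm F ar Empty | WN R t} t1 t2) :=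
  nerode_classes_of_WN_eq_SN_general R hWS

end LocalTerm
end

section
/- A string rewriting system R over a finite alphabet Σ is terminating on Σ* if and only if R is terminating on RFC(R), the set of right-hand sides of forward closures of R. -/
/-! Assume every word of `RFC R` terminates. No rule then has an empty left-hand side, since
`r → r ++ r → …`. For `u ∈ RFC R` and terminating `v`, the word `u ++ v` terminates, by induction
on `u` under rewriting and on `v` under rewriting or passing to a proper suffix: a step on
`u ++ v` rewrites inside `u` (staying in `RFC R`), inside `v`, or applies a rule `(c ++ c₂, r)`
with `u = x ++ c`, `v = c₂ ++ y`, giving `(x ++ r) ++ y` where `x ++ r ∈ RFC R` by right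
extension. Finally `a :: s` terminates when `s` does: a step either stays inside `s` or turns
a prefix `l ++ y` into `r ++ y` with `r ∈ RFC R` and `y` a suffix of `s`. -/

namespace LocalTermSRS

/-- One-step rewrite relation of a string rewriting system. -/
def SStep {Γ : Type} (R : Set (List Γ × List Γ)) (u v : List Γ) : Prop :=
  ∃ (x y l r : List Γ), (l, r) ∈ R ∧ u = x ++ l ++ y ∧ v = x ++ r ++ y

/-- The right-hand sides of forward closures of an SRS `R`: the smallest set
containing the right-hand sides of `R`, closed under rewriting and under
right extension. -/
inductive RFC {Γ : Type} (R : Set (List Γ × List Γ)) : List Γ → Prop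
  | rhs {l r : List Γ} : (l, r) ∈ R → RFC R r
  | step {u v : List Γ} : RFC R u → SStep R u v → RFC R v
  | ext {u l1 l2 r : List Γ} :
      RFC R (u ++ l1) → (l1 ++ l2, r) ∈ R → l1 ≠ [] → RFC R (u ++ r)

section
variable {Γ : Type} {R : Set (List Γ × List Γ)}

theorem acc_flip_sstep_iff {w : List Γ} :
    Acc (flip (SStep R)) w ↔ ¬ ∃ f : ℕ → List Γ, f 0 = w ∧ ∀ n, SStep R (f n) (f (n + 1)) :=
  not_acc_iff_exists_descending_chain.not_right

theorem SStep.append_left {s s' : List Γ} (p : List Γ) (h : SStep R s s') :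
    SStep R (p ++ s) (p ++ s') := by
  obtain ⟨x, y, l, r, hR, rfl, rfl⟩ := h
  exact ⟨p ++ x, y, l, r, hR, by simp, by simp⟩

theorem SStep.append_cases {u v w : List Γ} (h : SStep R (u ++ v) w) :
    (∃ u', SStep R u u' ∧ w = u' ++ v) ∨ (∃ v', SStep R v v' ∧ w = u ++ v') ∨
      ∃ x c c₂ y r, (c ++ c₂, r) ∈ R ∧ c ≠ [] ∧ c₂ ≠ [] ∧
        u = x ++ c ∧ v = c₂ ++ y ∧ w = x ++ r ++ y := by
  obtain ⟨x, y, l, r, hR, huv, rfl⟩ := h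
  have inside_u {a : List Γ} (hu : u = x ++ l ++ a) (hy : y = a ++ v) :
      ∃ u', SStep R u u' ∧ x ++ r ++ y = u' ++ v :=
    ⟨x ++ r ++ a, ⟨x, a, l, r, hR, hu, rfl⟩, by simp [hy]⟩
  have inside_v {a : List Γ} (hx : x = u ++ a) (hv : v = a ++ l ++ y) :
      ∃ v', SStep R v v' ∧ x ++ r ++ y = u ++ v' :=
    ⟨a ++ r ++ y, ⟨a, y, l, r, hR, hv, rfl⟩, by simp [hx]⟩
  rw [List.append_assoc, List.append_eq_append_iff] at huv
  rcases huv with ⟨a, hx, hv⟩ | ⟨c, rfl, hlyv⟩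
  · exact .inr (.inl (inside_v hx (by simpa using hv)))
  rw [List.append_eq_append_iff] at hlyv
  rcases hlyv with ⟨a, rfl, hy⟩ | ⟨c₂, rfl, hv⟩
  · exact .inl (inside_u (by simp) hy)
  by_cases hc : c = []
  · exact .inr (.inl (inside_v (a := []) (by simp [hc]) (by simp [hc, hv])))
  by_cases hc₂ : c₂ = []
  · exact .inl (inside_u (a := []) (by simp [hc₂]) (by simp [hc₂, hv]))
  exact .inr (.inr ⟨x, c, c₂, y, r, hR, hc, hc₂, rfl, hv, rfl⟩)

theorem SStep.cons_cases {a : Γ} {s w : List Γ} (h : SStep R (a :: s) w) :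
    (∃ s', SStep R s s' ∧ w = a :: s') ∨
      ∃ l r y, (l, r) ∈ R ∧ a :: s = l ++ y ∧ w = r ++ y := by
  obtain ⟨x, y, l, r, hR, hs, rfl⟩ := h
  cases x with
  | nil => exact .inr ⟨l, r, y, hR, hs, by simp⟩
  | cons b x =>
    obtain ⟨rfl, rfl⟩ : a = b ∧ s = x ++ l ++ y := by simpa using hs
    exact .inl ⟨x ++ r ++ y, ⟨x, y, l, r, hR, rfl, rfl⟩, by simp⟩

theorem not_acc_of_nil_mem {r : List Γ} (hR : ([], r) ∈ R) (w : List Γ) :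
    ¬ Acc (flip (SStep R)) w := by
  intro h
  induction h with
  | intro w _ ih => exact ih (r ++ w) ⟨[], w, [], r, hR, by simp, by simp⟩

def StepOrSuffix (R : Set (List Γ × List Γ)) (v' v : List Γ) : Prop :=
  SStep R v v' ∨ (v'.length < v.length ∧ v' <:+ v)

-- Rewriting commutes with dropping a prefix.
theorem acc_stepOrSuffix_of_suffix {v y : List Γ} (hv : Acc (flip (SStep R)) v)
    (hy : y <:+ v) : Acc (StepOrSuffix R) y := by
  induction hv generalizing y with
  | intro v _ ihv =>
    induction y using (measure List.length).wf.induction with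
    | _ y ihy =>
      refine ⟨y, fun y' hy' => ?_⟩
      rcases hy' with hstep | ⟨hlt, hsuf⟩
      · obtain ⟨p, rfl⟩ := hy
        exact ihv _ (hstep.append_left p) (List.suffix_append p y')
      · exact ihy y' hlt (hsuf.trans hy)

theorem acc_append_of_rfc (hRFC : ∀ u, RFC R u → Acc (flip (SStep R)) u) {u v : List Γ}
    (hv : Acc (StepOrSuffix R) v) (hu : RFC R u) : Acc (flip (SStep R)) (u ++ v) := by
  induction hv generalizing u with
  | intro v _ ihv =>
    have hu_acc := hRFC u hu
    induction hu_acc with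
    | intro u _ ihu =>
      refine ⟨_, fun w hw => ?_⟩
      rcases SStep.append_cases hw with ⟨u', hu', rfl⟩ | ⟨v', hv', rfl⟩ |
        ⟨x, c, c₂, y, r, hR, hc, hc₂, rfl, rfl, rfl⟩
      · exact ihu u' hu' (hu.step hu')
      · exact ihv v' (.inl hv') hu
      · have hy : y.length < (c₂ ++ y).length := by
          simpa using List.length_pos_iff.mpr hc₂
        exact ihv y (.inr ⟨hy, List.suffix_append c₂ y⟩) (hu.ext hR hc)

theorem acc_cons (hRFC : ∀ u, RFC R u → Acc (flip (SStep R)) u) (a : Γ) {s : List Γ}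
    (hs : Acc (flip (SStep R)) s) : Acc (flip (SStep R)) (a :: s) := by
  induction hs with
  | intro s hs ihs =>
    refine ⟨_, fun w hw => ?_⟩
    rcases SStep.cons_cases hw with ⟨s', hs', rfl⟩ | ⟨l, r, y, hR, hsplit, rfl⟩
    · exact ihs s' hs'
    cases l with
    | nil => exact absurd (hRFC r (.rhs hR)) (not_acc_of_nil_mem hR r)
    | cons b l =>
      have hy : y <:+ s := ⟨l, (List.cons.inj hsplit).2.symm⟩
      exact acc_append_of_rfc hRFC (acc_stepOrSuffix_of_suffix ⟨s, hs⟩ hy) (.rhs hR)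

theorem acc_of_forall_rfc (hRFC : ∀ u, RFC R u → Acc (flip (SStep R)) u) (w : List Γ) :
    Acc (flip (SStep R)) w := by
  induction w with
  | nil =>
    refine ⟨[], fun w ⟨x, y, l, r, hR, hnil, _⟩ => ?_⟩
    obtain ⟨-, rfl, -⟩ : x = [] ∧ l = [] ∧ y = [] := by simpa using hnil.symm
    exact absurd (hRFC r (.rhs hR)) (not_acc_of_nil_mem hR r)
  | cons a s ih => exact acc_cons hRFC a ih

end

theorem srs_terminating_iff_terminating_on_RFC_general
    {Γ : Type} (R : Set (List Γ × List Γ)) :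
    (∀ w : List Γ, ¬ ∃ f : ℕ → List Γ, f 0 = w ∧
        ∀ n : ℕ, SStep R (f n) (f (n + 1))) ↔
    (∀ w : List Γ, RFC R w → ¬ ∃ f : ℕ → List Γ, f 0 = w ∧
        ∀ n : ℕ, SStep R (f n) (f (n + 1))) := by
  simp only [← acc_flip_sstep_iff]
  exact ⟨fun h w _ => h w, acc_of_forall_rfc⟩

/-- An SRS `R` over a finite alphabet is terminating on all
words iff it is terminating on `RFC(R)`. -/
theorem srs_terminating_iff_terminating_on_RFC
    {Γ : Type} [Fintype Γ] (R : Set (List Γ × List Γ)) :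
    (∀ w : List Γ, ¬ ∃ f : ℕ → List Γ, f 0 = w ∧
        ∀ n : ℕ, SStep R (f n) (f (n + 1))) ↔
    (∀ w : List Γ, RFC R w → ¬ ∃ f : ℕ → List Γ, f 0 = w ∧
        ∀ n : ℕ, SStep R (f n) (f (n + 1))) :=
  srs_terminating_iff_terminating_on_RFC_general R

end LocalTermSRS
end

section
/- The combinatory-logic TRS consisting of the single rule @(@(@(S,x),y),z) → @(@(x,z),@(y,z)) (the S-combinator rule S x y z → x z (y z)) is terminating on the set T = {Sⁿ : n ≥ 1} of flat S-terms, where S¹ = S and S^{n+1} = @(Sⁿ, S): no term Sⁿ admits an infinite rewrite sequence. -/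
/-!
The only redex on the spine of `(S S w) S^k` is `S S w S → S S (w S)`, which moves one trailing
`S` into `w`; every other step takes place inside `w`. So, by induction on `k` and then on the
reductions of `w`, the term `(S S w) S^k` is strongly normalizing as soon as `w, w S, …, w S^k`
are. As `S^{n+3} = (S S S) S^n`, strong induction on `n` shows that every flat term is strongly
normalizing.
-/

namespace CLS

/-- Ground terms of combinatory logic over a set `C` of constants,
built with a binary application symbol. -/
inductive CL (C : Type) : Type
  | const : C → CL C
  | app : CL C → CL C → CL C

/-- One-step rewriting with the rule `S x y z → x z (y z)` (the only constant
is `S`): a rule instance inside a one-hole context. -/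
inductive SRw : CL Unit → CL Unit → Prop
  | root (x y z : CL Unit) :
      SRw (.app (.app (.app (.const ()) x) y) z) (.app (.app x z) (.app y z))
  | appl {s t : CL Unit} (u : CL Unit) : SRw s t → SRw (.app s u) (.app t u)
  | appr (u : CL Unit) {s t : CL Unit} : SRw s t → SRw (.app u s) (.app u t)

/-- The flat S-terms: `flatS n = S^{n+1}`, i.e. `flatS 0 = S` and
`flatS (n+1) = (flatS n) S`. -/
def flatS : ℕ → CL Unit
  | 0 => .const ()
  | n + 1 => .app (flatS n) (.const ())

theorem _root_.Acc.not_forall_rel_succ {α : Type*} {r : α → α → Prop} {f : ℕ → α}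
    (h : Acc r (f 0)) : ¬ ∀ k, r (f (k + 1)) (f k) := by
  generalize hf : f 0 = a at h
  induction h generalizing f with
  | intro a _ ih =>
    intro hr
    exact ih (f 1) (hf ▸ hr 0) (f := fun k => f (k + 1)) rfl fun k => hr (k + 1)

local notation "𝐒" => CL.const ()

def SN : CL Unit → Prop := Acc fun u t => SRw t u

def appS (t : CL Unit) : ℕ → CL Unit
  | 0 => t
  | k + 1 => .app (appS t k) 𝐒

theorem appS_succ (t : CL Unit) (k : ℕ) : appS t (k + 1) = appS (.app t 𝐒) k := by
  induction k with
  | zero => rfl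
  | succ k ih => exact congrArg (CL.app · 𝐒) ih

theorem flatS_eq_appS (n : ℕ) : flatS n = appS 𝐒 n := by
  induction n with
  | zero => rfl
  | succ n ih => exact congrArg (CL.app · 𝐒) ih

theorem SRw.appS_congr {s t : CL Unit} (h : SRw s t) (k : ℕ) : SRw (appS s k) (appS t k) := by
  induction k with
  | zero => exact h
  | succ k ih => exact ih.appl 𝐒

theorem appS_app_ne_const (a b : CL Unit) (k : ℕ) (c : Unit) : appS (.app a b) k ≠ .const c := by
  cases k <;> simp [appS]

theorem sn_S : SN 𝐒 := ⟨_, fun _ h => by cases h⟩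

theorem sn_SS : SN (.app 𝐒 𝐒) := ⟨_, fun _ h => by cases h <;> contradiction⟩

theorem SRw.appS_SS_cases {w t : CL Unit} {k : ℕ} (h : SRw (appS (.app (.app 𝐒 𝐒) w) k) t) :
    (∃ k', k = k' + 1 ∧ t = appS (.app (.app 𝐒 𝐒) (.app w 𝐒)) k') ∨
    ∃ w', SRw w w' ∧ t = appS (.app (.app 𝐒 𝐒) w') k := by
  induction k generalizing t with
  | zero =>
    cases h with
    | appl _ h => exact absurd h fun h => by cases h <;> contradiction
    | appr _ h => exact .inr ⟨_, h, rfl⟩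
  | succ k ih =>
    change SRw (.app (appS _ k) 𝐒) t at h
    generalize hs : appS _ k = s at h
    cases h with
    | root x y =>
      rcases k with _ | _ | k
      · cases hs
        exact .inl ⟨0, rfl, rfl⟩
      · cases hs
      · simp only [appS, CL.app.injEq] at hs
        exact absurd hs.1.1 (appS_app_ne_const _ _ _ _)
    | appl _ h =>
      subst hs
      rcases ih h with ⟨k', rfl, rfl⟩ | ⟨w', hw, rfl⟩
      · exact .inl ⟨k' + 1, rfl, rfl⟩
      · exact .inr ⟨w', hw, rfl⟩
    | appr _ h => cases h

theorem sn_appS_SS {w : CL Unit} {k : ℕ} (hw : ∀ j ≤ k, SN (appS w j)) :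
    SN (appS (.app (.app 𝐒 𝐒) w) k) := by
  induction k using Nat.strong_induction_on generalizing w with
  | _ k ihk =>
  have hw0 : SN w := hw 0 k.zero_le
  induction hw0 with
  | intro w _ ihw =>
  refine ⟨_, fun t ht => ?_⟩
  rcases ht.appS_SS_cases with ⟨k', rfl, rfl⟩ | ⟨w', hww', rfl⟩
  · exact ihk k' k'.lt_succ_self fun j hj => appS_succ w j ▸ hw (j + 1) (by omega)
  · exact ihw w' hww' fun j hj => (hw j hj).inv (hww'.appS_congr j)

theorem sn_flatS (n : ℕ) : SN (flatS n) := by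
  induction n using Nat.strong_induction_on with
  | _ n ih =>
  match n with
  | 0 => exact sn_S
  | 1 => exact sn_SS
  | n + 2 =>
    rw [flatS_eq_appS, appS_succ, appS_succ]
    exact sn_appS_SS fun j hj => flatS_eq_appS j ▸ ih j (by omega)

/-- The S-combinator rule is terminating on the set of flat
S-terms `{Sⁿ : n ≥ 1}`. -/
theorem S_rule_terminating_on_flat_S_terms :
    ∀ n : ℕ, ¬ ∃ f : ℕ → CL Unit, f 0 = flatS n ∧
      ∀ k : ℕ, SRw (f k) (f (k + 1)) := by
  rintro n ⟨f, hf0, hf⟩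
  exact Acc.not_forall_rel_succ (hf0 ▸ sn_flatS n) hf

end CLS
end

section
/- The combinatory-logic TRS with the two rules @(@(@(S,x),y),z) → @(@(x,z),@(y,z)) (S x y z → x z (y z)) and @(@(K,x),y) → x (K x y → x) is terminating on the set T of flat S,K-terms, i.e., on all left-associated applications c₁c₂⋯cₙ = @(…@(@(c₁,c₂),c₃)…,cₙ) with n ≥ 1 and each cᵢ ∈ {S, K}. -/
/-!
Flat terms belong to the grammar `F ::= c | h c F | F d` of `CLSK.IsSpine`, which is closed under
rewriting. In such a term every `S`-redex `S x y z` has constants `x` and `z`, so contracting it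
keeps the number of constants and only moves the constant `z` into the argument `y`. The weight
that charges every application node with the size of its function part therefore drops by two
under an `S`-step, drops under every `K`-step, and never increases under a context since sizes
of spines do not grow.
-/

namespace CLSK

/-- Ground terms of combinatory logic over a set `C` of constants. -/
inductive CL (C : Type) : Type
  | const : C → CL C
  | app : CL C → CL C → CL C

/-- The two constants `S` and `K`. -/
inductive SK : Type
  | S : SK
  | K : SK

/-- One-step rewriting with the rules `S x y z → x z (y z)` and
`K x y → x`. -/
inductive SKRw : CL SK → CL SK → Prop
  | sroot (x y z : CL SK) :
      SKRw (.app (.app (.app (.const SK.S) x) y) z)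
           (.app (.app x z) (.app y z))
  | kroot (x y : CL SK) : SKRw (.app (.app (.const SK.K) x) y) x
  | appl {s t : CL SK} (u : CL SK) : SKRw s t → SKRw (.app s u) (.app t u)
  | appr (u : CL SK) {s t : CL SK} : SKRw s t → SKRw (.app u s) (.app u t)

/-- Left-associated application of a list of constants to a term:
`leftAssoc t [c₁,…,cₖ] = ((t c₁) c₂ ⋯) cₖ`. -/
def leftAssoc : CL SK → List SK → CL SK
  | t, [] => t
  | t, c :: cs => leftAssoc (.app t (.const c)) cs

namespace CL

variable {C : Type}

def size : CL C → ℕ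
  | .const _ => 1
  | .app a b => a.size + b.size

def weight : CL C → ℕ
  | .const _ => 0
  | .app a b => a.weight + b.weight + a.size

end CL

open CL

inductive IsSpine : CL SK → Prop
  | const (c : SK) : IsSpine (.const c)
  | app₂ (h c : SK) {u : CL SK} : IsSpine u → IsSpine (.app (.app (.const h) (.const c)) u)
  | appConst {t : CL SK} (d : SK) : IsSpine t → IsSpine (.app t (.const d))

theorem IsSpine.leftAssoc {t : CL SK} (ht : IsSpine t) (cs : List SK) :
    IsSpine (CLSK.leftAssoc t cs) := by
  induction cs generalizing t with
  | nil => exact ht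
  | cons d cs ih => exact ih (ht.appConst d)

theorem not_rw_app_const_const (a b : SK) (t : CL SK) :
    ¬ SKRw (.app (.const a) (.const b)) t := by
  rintro (_ | _ | ⟨_, h⟩ | ⟨_, h⟩) <;> cases h

theorem SKRw.isSpine_and_size_le_and_weight_lt {t t' : CL SK} (hr : SKRw t t') (ht : IsSpine t) :
    IsSpine t' ∧ t'.size ≤ t.size ∧ t'.weight < t.weight := by
  induction hr with
  | sroot x y z =>
    rcases ht with _ | _ | ⟨d, _ | ⟨_, c, hy⟩ | ⟨e, _ | _ | ⟨c, _⟩⟩⟩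
    · refine ⟨.app₂ c d (hy.appConst d), ?_, ?_⟩ <;> simp only [size, weight] <;> omega
    · refine ⟨.app₂ c d ((IsSpine.const e).appConst d), ?_, ?_⟩ <;>
        simp only [size, weight] <;> omega
  | kroot x y =>
    rcases ht with _ | ⟨_, c, _⟩ | ⟨_, _ | _ | ⟨c, _⟩⟩
    all_goals refine ⟨.const c, ?_, ?_⟩ <;> simp only [size, weight] <;> omega
  | appl u hr ih =>
    rcases ht with _ | ⟨h, c, _⟩ | ⟨d, hs⟩
    · exact absurd hr (not_rw_app_const_const h c _)
    · obtain ⟨ht', hsize, hweight⟩ := ih hs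
      refine ⟨ht'.appConst d, ?_, ?_⟩ <;> simp only [size, weight] <;> omega
  | appr u hr ih =>
    rcases ht with _ | ⟨h, c, hs⟩ | ⟨d, _⟩
    · obtain ⟨ht', hsize, hweight⟩ := ih hs
      refine ⟨ht'.app₂ h c, ?_, ?_⟩ <;> simp only [size, weight] <;> omega
    · cases hr

theorem IsSpine.acc {t : CL SK} (ht : IsSpine t) : Acc (Function.swap SKRw) t :=
  .intro t fun t' hr =>
    have hstep := SKRw.isSpine_and_size_le_and_weight_lt hr ht
    hstep.1.acc
termination_by t.weight
decreasing_by exact hstep.2.2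

/-- Combinatory logic with `S` and `K` is terminating on
the set of flat S,K-terms `c₁c₂⋯cₙ` (`n ≥ 1`, each `cᵢ ∈ {S,K}`). -/
theorem SK_terminating_on_flat_terms :
    ∀ (c : SK) (cs : List SK),
      ¬ ∃ f : ℕ → CL SK, f 0 = leftAssoc (.const c) cs ∧
        ∀ k : ℕ, SKRw (f k) (f (k + 1)) := fun c cs hchain =>
  not_acc_iff_exists_descending_chain.mpr hchain ((IsSpine.const c).leftAssoc cs).acc

end CLSK
end

section
/- Consider ground terms of combinatory logic over the single constant O and the Owl rule @(@(O,x),y) → @(y,@(x,y)) (O x y → y (x y)). Define a partial interpretation into A = {0,1} by [[O]] = 0, [[@]](0,0) = 1, [[@]](0,1) = 1, [[@]](1,0) = 1, and [[@]](1,1) undefined, extended to ground terms by partial evaluation. Then every ground term t whose interpretation [[t]] is undefined contains a redex, i.e., a subterm of the form @(@(O,t₁),t₂). -/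
namespace Owl

/-- Ground terms of combinatory logic over a set `C` of constants. -/
inductive CL (C : Type) : Type
  | const : C → CL C
  | app : CL C → CL C → CL C

/-- The partial interpretation of application on `A = {0,1}`:
`(0,0) ↦ 1`, `(0,1) ↦ 1`, `(1,0) ↦ 1`, `(1,1)` undefined. -/
def appI : Fin 2 → Fin 2 → Option (Fin 2) := fun a b =>
  if a = 0 then some 1 else if b = 0 then some 1 else none

/-- Partial evaluation of ground terms: `[[O]] = 0` and
`[[@(t₁,t₂)]] ≃ appI [[t₁]] [[t₂]]`. -/
def evalO : CL Unit → Option (Fin 2)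
  | .const _ => some 0
  | .app t u => (evalO t).bind fun a => (evalO u).bind fun b => appI a b

/-- Subterm relation on CL terms. -/
inductive CLSub {C : Type} : CL C → CL C → Prop
  | refl (t : CL C) : CLSub t t
  | left {s t : CL C} (u : CL C) : CLSub s t → CLSub s (.app t u)
  | right {s t : CL C} (u : CL C) : CLSub s t → CLSub s (.app u t)

/-!
A redex-free term is `O` or `O t` with `t` redex-free, since any term `O t₁ … tₙ` with `n ≥ 2`
contains the redex `O t₁ t₂`. On such terms every application that occurs has left argument
`[[O]] = 0`, and `[[@]](0, b)` is always defined.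
-/

def HasOwlRedex (t : CL Unit) : Prop :=
  ∃ t1 t2 : CL Unit, CLSub (.app (.app (.const ()) t1) t2) t

theorem HasOwlRedex.app_left {t : CL Unit} (h : HasOwlRedex t) (u : CL Unit) :
    HasOwlRedex (.app t u) :=
  let ⟨t1, t2, hs⟩ := h
  ⟨t1, t2, .left u hs⟩

theorem HasOwlRedex.app_right {u : CL Unit} (h : HasOwlRedex u) (t : CL Unit) :
    HasOwlRedex (.app t u) :=
  let ⟨t1, t2, hs⟩ := h
  ⟨t1, t2, .right t hs⟩

theorem eq_const_of_not_hasOwlRedex_app {t u : CL Unit} (h : ¬HasOwlRedex (.app t u)) :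
    t = .const () ∧ ¬HasOwlRedex u := by
  refine ⟨?_, fun hu => h (hu.app_right t)⟩
  induction t generalizing u with
  | const c => rfl
  | app a b iha =>
    obtain rfl := iha fun hab => h (hab.app_left u)
    exact absurd ⟨b, u, .refl _⟩ h

theorem evalO_ne_none_of_not_hasOwlRedex {t : CL Unit} (h : ¬HasOwlRedex t) :
    evalO t ≠ none := by
  induction t with
  | const c => simp [evalO]
  | app t u _ ihu =>
    obtain ⟨rfl, hu⟩ := eq_const_of_not_hasOwlRedex_app h
    obtain ⟨b, hb⟩ := Option.ne_none_iff_exists'.mp (ihu hu)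
    simp [evalO, hb, appI]

/-- Every ground `O`-term with undefined interpretation
contains an Owl-redex, i.e. a subterm of the form `@(@(O,t₁),t₂)`. -/
theorem undefined_owl_term_contains_redex :
    ∀ t : CL Unit, evalO t = none →
      ∃ t1 t2 : CL Unit,
        CLSub (.app (.app (.const ()) t1) t2) t := by
  intro t ht
  by_contra h
  exact evalO_ne_none_of_not_hasOwlRedex h ht

end Owl
end
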